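/- For every finite simple graph G with maximum degree Δ ≥ 3, π(G) ≤ π_ℓ(G) ≤ ⌈Δ² + (3/2^{2/3})·Δ^{5/3} + 2^{2/3}·Δ^{5/3}/(Δ^{1/3} − 2^{1/3})⌉. -/

import Mathlib

/-!
Rosenfeld's counting argument. Fix lists of size `k` and let `C(S)` count the list colourings that
are nonrepetitive on the paths inside `S`. By induction on `|S|`, `C(S) ≥ β C(S - v)` for `v ∈ S`:
of the `k C(S - v)` ways to extend a colouring of `S - v` to `v`, a failing one contains a square
path `a ++ b` with `v ∈ a`, it is determined by its restriction to `S - a` (the colours on `a`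
repeat those on `b`), and there are at most `C(S - v) / β^(|a| - 1)` such restrictions and at most
`|a| Δ^(2|a| - 1)` such paths. Hence `C(S) ≥ (k - Σ_t t Δ^(2t-1) / β^(t-1)) C(S - v) ≥ β C(S - v)`
once `k ≥ β + Σ_t t Δ^(2t-1) / β^(t-1)`, so `C(V) > 0`; the choice
`β = Δ² + 2^(1/3) Δ^(5/3)` bounds the right-hand side by the stated expression.
-/

open SimpleGraph

/-- A vertex colouring `φ` of `G` is nonrepetitive if for no path of `G` the sequence of
colours along its vertices is a repetition, i.e. of the form `l ++ l` with `l` nonempty. -/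
def Nonrepetitive {V β : Type*} (G : SimpleGraph V) (φ : V → β) : Prop :=
  ∀ ⦃u v : V⦄ (p : G.Walk u v), p.IsPath →
    ∀ l : List β, l ≠ [] → p.support.map φ ≠ l ++ l

/-- The Thue chromatic number of `G`: the least number of colours in a nonrepetitive
vertex colouring of `G`. -/
noncomputable def thueNumber {V : Type*} (G : SimpleGraph V) : ℕ :=
  sInf {k | ∃ φ : V → Fin k, Nonrepetitive G φ}

/-- The Thue choice number of `G`: the least `k` such that from any assignment of lists of
size at least `k` to the vertices one can choose a nonrepetitive vertex colouring. -/
noncomputable def thueChoiceNumber {V : Type*} (G : SimpleGraph V) : ℕ :=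
  sInf {k | ∀ L : V → Finset ℕ, (∀ v, k ≤ (L v).card) →
    ∃ φ : V → ℕ, (∀ v, φ v ∈ L v) ∧ Nonrepetitive G φ}

open Finset

section SquarePaths

variable {V α : Type*} (G : SimpleGraph V)

def IsSquarePath (S : Finset V) (φ : V → α) (a b : List V) : Prop :=
  (a ++ b).IsChain G.Adj ∧ (a ++ b).Nodup ∧ (∀ x ∈ a ++ b, x ∈ S) ∧ a.map φ = b.map φ

def NonrepetitiveOn (S : Finset V) (φ : V → α) : Prop :=
  ∀ a b, IsSquarePath G S φ a b → a = []

variable {G}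

lemma IsSquarePath.congr {S T : Finset V} {φ ψ : V → α} {a b : List V}
    (h : IsSquarePath G S φ a b) (hT : ∀ x ∈ a ++ b, x ∈ T) (hψ : ∀ x ∈ a ++ b, ψ x = φ x) :
    IsSquarePath G T ψ a b := by
  obtain ⟨hchain, hnd, -, hmap⟩ := h
  refine ⟨hchain, hnd, hT, ?_⟩
  rw [List.map_congr_left fun x hx => hψ x (List.mem_append_left b hx),
    List.map_congr_left fun x hx => hψ x (List.mem_append_right a hx), hmap]

lemma IsSquarePath.reverse {S : Finset V} {φ : V → α} {a b : List V}
    (h : IsSquarePath G S φ a b) : IsSquarePath G S φ b.reverse a.reverse := by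
  obtain ⟨hchain, hnd, hS, hmap⟩ := h
  unfold IsSquarePath
  rw [← List.reverse_append]
  exact ⟨List.isChain_reverse.mpr (hchain.imp fun _ _ h => h.symm), List.nodup_reverse.mpr hnd,
    fun x hx => hS x (List.mem_reverse.mp hx), by rw [List.map_reverse, List.map_reverse, hmap]⟩

lemma NonrepetitiveOn.mono {S T : Finset V} {φ ψ : V → α} (h : NonrepetitiveOn G S φ)
    (hTS : T ⊆ S) (hψ : ∀ x ∈ T, ψ x = φ x) : NonrepetitiveOn G T ψ := fun a b hab =>
  h a b (hab.congr (fun x hx => hTS (hab.2.2.1 x hx)) fun x hx => (hψ x (hab.2.2.1 x hx)).symm)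

lemma nonrepetitiveOn_empty (φ : V → α) : NonrepetitiveOn G ∅ φ := by
  rintro (_ | ⟨x, a⟩) b hab
  · rfl
  · exact absurd (hab.2.2.1 x (by simp)) (notMem_empty x)

lemma Nonrepetitive.of_nonrepetitiveOn_univ [Fintype V] {φ : V → α}
    (h : NonrepetitiveOn G univ φ) : Nonrepetitive G φ := by
  intro u v p hp l hl hrep
  have hsupp := List.take_append_drop l.length p.support
  have hsq : IsSquarePath G univ φ (p.support.take l.length) (p.support.drop l.length) := by
    refine ⟨by rw [hsupp]; exact p.isChain_adj_support, by rw [hsupp]; exact hp.support_nodup,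
      fun x _ => mem_univ x, ?_⟩
    rw [List.map_take, List.map_drop, hrep, List.take_left' rfl, List.drop_left' rfl]
  apply hl
  simpa [List.map_take, hrep] using congrArg (List.map φ) (h _ _ hsq)

lemma Nonrepetitive.of_comp {β γ : Type*} {φ : V → β} {f : β → γ}
    (h : Nonrepetitive G (f ∘ φ)) : Nonrepetitive G φ := by
  intro u v p hp l hl hrep
  exact h p hp (l.map f) (by simpa using hl) (by rw [← List.map_map, hrep, List.map_append])

/-- Reversing the square if necessary puts `v` in its first half. -/
lemma exists_isSquarePath_of_not_nonrepetitiveOn_update [DecidableEq V] {S : Finset V} {v : V}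
    {φ : V → α} {c : α} (hφ : NonrepetitiveOn G (S.erase v) φ)
    (h : ¬ NonrepetitiveOn G S (Function.update φ v c)) :
    ∃ a b, IsSquarePath G S (Function.update φ v c) a b ∧ v ∈ a := by
  simp only [NonrepetitiveOn, not_forall] at h
  obtain ⟨a, b, hab, hne⟩ := h
  have hv : v ∈ a ++ b := by
    by_contra hv
    have hxv : ∀ x ∈ a ++ b, x ≠ v := fun x hx hxv => hv (hxv ▸ hx)
    exact hne (hφ a b (hab.congr (fun x hx => mem_erase.mpr ⟨hxv x hx, hab.2.2.1 x hx⟩)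
      fun x hx => (Function.update_of_ne (hxv x hx) _ _).symm))
  rcases List.mem_append.mp hv with hva | hvb
  · exact ⟨a, b, hab, hva⟩
  · exact ⟨b.reverse, a.reverse, hab.reverse, List.mem_reverse.mpr hvb⟩

end SquarePaths

/-- The colours of the first half of a square are read off from the second half. -/
lemma eq_of_map_eq_map_of_forall_notMem {V α : Type*} {a b : List V} (hnd : (a ++ b).Nodup)
    {f g : V → α} (hf : a.map f = b.map f) (hg : a.map g = b.map g)
    (hfg : ∀ u ∉ a, f u = g u) : f = g := by
  have hlen : a.length = b.length := by simpa using congrArg List.length hf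
  have at_index : ∀ h : V → α, a.map h = b.map h → ∀ j (hj : j < a.length),
      h a[j] = h (b[j]'(hlen ▸ hj)) := fun h hh j hj => by
    simpa [List.getElem?_eq_getElem hj, List.getElem?_eq_getElem (hlen ▸ hj)] using
      congrArg (·[j]?) hh
  funext u
  by_cases hu : u ∈ a
  · obtain ⟨j, hj, rfl⟩ := List.getElem_of_mem hu
    have hb : b[j] ∉ a := fun hba =>
      (List.nodup_append.mp hnd).2.2 _ hba _ (List.getElem_mem _) rfl
    rw [at_index f hf j hj, at_index g hg j hj, hfg _ hb]
  · exact hfg u hu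

lemma eq_of_update_eq_update {V β : Type*} [DecidableEq V] {f g : V → β} {v : V} {c d : β}
    (hv : f v = g v) (h : Function.update f v c = Function.update g v d) : f = g ∧ c = d := by
  refine ⟨?_, by simpa using congrFun h v⟩
  calc f = Function.update (Function.update f v c) v (f v) := by simp
    _ = Function.update (Function.update g v d) v (g v) := by rw [h, hv]
    _ = g := by simp

lemma pow_card_mul_le_of_forall_erase {ι : Type*} [DecidableEq ι] {f : Finset ι → ℝ} {β : ℝ}
    (hβ : 0 ≤ β) {U : Finset ι} (h : ∀ T ⊆ U, ∀ u ∈ T, β * f (T.erase u) ≤ f T) :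
    ∀ R ⊆ U, β ^ #R * f (U \ R) ≤ f U := by
  intro R
  induction R using Finset.induction with
  | empty => simp
  | insert u R hu ih =>
    intro hRU
    have hstep := h (U \ R) sdiff_subset u (mem_sdiff.mpr ⟨hRU (mem_insert_self u R), hu⟩)
    calc β ^ #(insert u R) * f (U \ insert u R) = β ^ #R * (β * f ((U \ R).erase u)) := by
          rw [card_insert_of_notMem hu, pow_succ, sdiff_insert, mul_assoc]
      _ ≤ β ^ #R * f (U \ R) := mul_le_mul_of_nonneg_left hstep (pow_nonneg hβ _)
      _ ≤ f U := ih ((subset_insert u R).trans hRU)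

section Chains

variable {V : Type*} [DecidableEq V] (G : SimpleGraph V) [G.LocallyFinite]

def adjChains : ℕ → V → Finset (List V)
  | 0, _ => {[]}
  | n + 1, v => (G.neighborFinset v).biUnion fun w => (adjChains n w).image (w :: ·)

def chainsThrough (i j : ℕ) (v : V) : Finset (List V) :=
  (adjChains G i v ×ˢ adjChains G j v).image fun p => p.1.reverse ++ v :: p.2

variable {G}

lemma mem_adjChains {n : ℕ} {v : V} {l : List V} (hl : l.length = n)
    (h : (v :: l).IsChain G.Adj) : l ∈ adjChains G n v := by
  induction n generalizing v l with
  | zero => simp [adjChains, List.length_eq_zero_iff.mp hl]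
  | succ n ih =>
    obtain _ | ⟨w, l⟩ := l
    · simp at hl
    · rw [List.isChain_cons_cons] at h
      simp only [adjChains, mem_biUnion, mem_neighborFinset, mem_image]
      exact ⟨w, h.1, l, ih (by simpa using hl) h.2, rfl⟩

lemma length_of_mem_adjChains {n : ℕ} {v : V} {l : List V} (h : l ∈ adjChains G n v) :
    l.length = n := by
  induction n generalizing v l with
  | zero => simpa [adjChains] using h
  | succ n ih =>
    simp only [adjChains, mem_biUnion, mem_image] at h
    obtain ⟨w, -, l, hl, rfl⟩ := h
    simp [ih hl]

lemma card_adjChains_le {Δ : ℕ} (hdeg : ∀ v, G.degree v ≤ Δ) (n : ℕ) (v : V) :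
    #(adjChains G n v) ≤ Δ ^ n := by
  induction n generalizing v with
  | zero => simp [adjChains]
  | succ n ih =>
    calc #(adjChains G (n + 1) v)
        ≤ ∑ w ∈ G.neighborFinset v, #((adjChains G n w).image (w :: ·)) := card_biUnion_le
      _ ≤ ∑ _w ∈ G.neighborFinset v, Δ ^ n := sum_le_sum fun w _ => card_image_le.trans (ih w)
      _ = G.degree v * Δ ^ n := by rw [sum_const, smul_eq_mul, card_neighborFinset_eq_degree]
      _ ≤ Δ ^ (n + 1) := by rw [pow_succ']; exact Nat.mul_le_mul_right _ (hdeg v)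

lemma append_cons_mem_chainsThrough {a b : List V} {v : V} (h : (a ++ v :: b).IsChain G.Adj) :
    a ++ v :: b ∈ chainsThrough G a.length b.length v := by
  have hav : (a ++ [v]).IsChain G.Adj := h.prefix ⟨b, by simp⟩
  have hva : (v :: a.reverse).IsChain G.Adj := by
    simpa using List.isChain_reverse.mpr (hav.imp fun _ _ h => h.symm)
  exact mem_image.mpr ⟨(a.reverse, b), mem_product.mpr ⟨mem_adjChains (by simp) hva,
    mem_adjChains rfl (List.isChain_append.mp h).2.1⟩, by simp⟩

lemma length_of_mem_chainsThrough {i j : ℕ} {v : V} {s : List V}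
    (h : s ∈ chainsThrough G i j v) : s.length = i + j + 1 := by
  obtain ⟨⟨a, b⟩, hab, rfl⟩ := mem_image.mp h
  obtain ⟨ha, hb⟩ := mem_product.mp hab
  simp [length_of_mem_adjChains ha, length_of_mem_adjChains hb]
  omega

lemma card_chainsThrough_le {Δ : ℕ} (hdeg : ∀ v, G.degree v ≤ Δ) (i j : ℕ) (v : V) :
    #(chainsThrough G i j v) ≤ Δ ^ (i + j) := by
  calc #(chainsThrough G i j v) ≤ #(adjChains G i v ×ˢ adjChains G j v) := card_image_le
    _ = #(adjChains G i v) * #(adjChains G j v) := card_product _ _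
    _ ≤ Δ ^ i * Δ ^ j := Nat.mul_le_mul (card_adjChains_le hdeg i v) (card_adjChains_le hdeg j v)
    _ = Δ ^ (i + j) := (pow_add _ _ _).symm

end Chains

section Colorings

open scoped Classical

variable {V : Type*} [Fintype V] (G : SimpleGraph V) (L : V → Finset ℕ)

/-- Vertices outside `S` get colour `0`. -/
noncomputable def nonrepetitiveColorings (S : Finset V) : Finset (V → ℕ) :=
  (Fintype.piFinset fun w => if w ∈ S then L w else {0}).filter (NonrepetitiveOn G S)

noncomputable def badExtensions (S : Finset V) (v : V) : Finset ((V → ℕ) × ℕ) :=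
  (nonrepetitiveColorings G L (S.erase v) ×ˢ L v).filter
    fun p => ¬ NonrepetitiveOn G S (Function.update p.1 v p.2)

noncomputable def squareExtensions (S : Finset V) (v : V) (a b : List V) :
    Finset ((V → ℕ) × ℕ) :=
  (nonrepetitiveColorings G L (S.erase v) ×ˢ L v).filter
    fun p => IsSquarePath G S (Function.update p.1 v p.2) a b ∧ v ∈ a

variable {G L}

lemma mem_nonrepetitiveColorings {S : Finset V} {φ : V → ℕ} :
    φ ∈ nonrepetitiveColorings G L S ↔
      (∀ w ∈ S, φ w ∈ L w) ∧ (∀ w ∉ S, φ w = 0) ∧ NonrepetitiveOn G S φ := by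
  simp only [nonrepetitiveColorings, mem_filter, Fintype.mem_piFinset, ← and_assoc]
  refine and_congr_left' ⟨fun h => ⟨fun w hw => by simpa [hw] using h w,
    fun w hw => by simpa [hw] using h w⟩, fun h w => ?_⟩
  split_ifs with hw
  exacts [h.1 w hw, mem_singleton.mpr (h.2 w hw)]

lemma zero_mem_nonrepetitiveColorings_empty : 0 ∈ nonrepetitiveColorings G L ∅ :=
  mem_nonrepetitiveColorings.mpr ⟨by simp, fun _ _ => rfl, nonrepetitiveOn_empty _⟩

lemma card_mul_card_erase_le {S : Finset V} {v : V} (hv : v ∈ S) :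
    #(L v) * #(nonrepetitiveColorings G L (S.erase v)) ≤
      #(nonrepetitiveColorings G L S) + #(badExtensions G L S v) := by
  set pairs := nonrepetitiveColorings G L (S.erase v) ×ˢ L v
  have hgood : #(pairs.filter fun p => NonrepetitiveOn G S (Function.update p.1 v p.2)) ≤
      #(nonrepetitiveColorings G L S) := by
    refine card_le_card_of_injOn (fun p => Function.update p.1 v p.2) (fun p hp => ?_)
      (fun p hp q hq h => ?_)
    · obtain ⟨hpair, hnr⟩ := mem_filter.mp hp
      obtain ⟨hφ, hc⟩ := mem_product.mp hpair
      obtain ⟨hφL, hφ0, -⟩ := mem_nonrepetitiveColorings.mp hφ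
      refine mem_nonrepetitiveColorings.mpr ⟨fun w hw => ?_, fun w hw => ?_, hnr⟩
      · by_cases hwv : w = v
        · subst hwv; simpa using hc
        · simpa [hwv] using hφL w (mem_erase.mpr ⟨hwv, hw⟩)
      · have hwv : w ≠ v := fun h => hw (h ▸ hv)
        simpa [hwv] using hφ0 w fun h => hw (mem_of_mem_erase h)
    · have h0 : ∀ r ∈ pairs, r.1 v = 0 := fun r hr =>
        (mem_nonrepetitiveColorings.mp (mem_product.mp hr).1).2.1 v (notMem_erase v S)
      obtain ⟨h1, h2⟩ := eq_of_update_eq_update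
        ((h0 p (mem_filter.mp hp).1).trans (h0 q (mem_filter.mp hq).1).symm) h
      exact Prod.ext h1 h2
  rw [mul_comm, ← card_product, ← card_filter_add_card_filter_not
    (fun p => NonrepetitiveOn G S (Function.update p.1 v p.2))]
  exact Nat.add_le_add_right hgood _

/-- Erasing the first half `a` of the square loses nothing: it is recovered from the second half. -/
lemma card_squareExtensions_le {S : Finset V} {v : V} {a b : List V} :
    #(squareExtensions G L S v a b) ≤ #(nonrepetitiveColorings G L (S \ a.toFinset)) := by
  refine card_le_card_of_injOn (fun p u => if u ∈ a then 0 else p.1 u) (fun p hp => ?_)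
    (fun p hp q hq h => ?_)
  · obtain ⟨hpair, -, hva⟩ := mem_filter.mp hp
    obtain ⟨hφL, hφ0, hφnr⟩ := mem_nonrepetitiveColorings.mp (mem_product.mp hpair).1
    have hout : ∀ w ∈ S \ a.toFinset, w ∉ a := fun w hw h =>
      (mem_sdiff.mp hw).2 (List.mem_toFinset.mpr h)
    have hsub : S \ a.toFinset ⊆ S.erase v := fun w hw =>
      mem_erase.mpr ⟨fun h => hout w hw (h ▸ hva), (mem_sdiff.mp hw).1⟩
    refine mem_nonrepetitiveColorings.mpr ⟨fun w hw => ?_, fun w hw => ?_,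
      hφnr.mono hsub fun w hw => by simp [hout w hw]⟩
    · simpa [hout w hw] using hφL w (hsub hw)
    · by_cases hwa : w ∈ a
      · simp [hwa]
      · simpa [hwa] using hφ0 w fun h => hw (mem_sdiff.mpr ⟨mem_of_mem_erase h,
          fun h' => hwa (List.mem_toFinset.mp h')⟩)
  · obtain ⟨hp, hsq, hva⟩ := mem_filter.mp hp
    obtain ⟨hq, hsq', -⟩ := mem_filter.mp hq
    have h0 : ∀ r ∈ nonrepetitiveColorings G L (S.erase v) ×ˢ L v, r.1 v = 0 := fun r hr =>
      (mem_nonrepetitiveColorings.mp (mem_product.mp hr).1).2.1 v (notMem_erase v S)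
    have hoff : ∀ u ∉ a, Function.update p.1 v p.2 u = Function.update q.1 v q.2 u := by
      intro u hu
      have huv : u ≠ v := fun h => hu (h ▸ hva)
      simpa [hu, huv] using congrFun h u
    obtain ⟨h1, h2⟩ := eq_of_update_eq_update ((h0 p hp).trans (h0 q hq).symm)
      (eq_of_map_eq_map_of_forall_notMem hsq.2.1 hsq.2.2.2 hsq'.2.2.2 hoff)
    exact Prod.ext h1 h2

end Colorings

section Counting

open scoped Classical

variable {V : Type*} [Fintype V] {G : SimpleGraph V} {L : V → Finset ℕ}

lemma pow_mul_card_squareExtensions_le {β : ℝ} (hβ : 0 ≤ β) {S : Finset V} {v : V}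
    (hpow : ∀ R ⊆ S.erase v, β ^ #R * #(nonrepetitiveColorings G L (S.erase v \ R)) ≤
      (#(nonrepetitiveColorings G L (S.erase v)) : ℝ))
    {a b : List V} {t : ℕ} (ha : a.length = t + 1) :
    β ^ t * #(squareExtensions G L S v a b) ≤ (#(nonrepetitiveColorings G L (S.erase v)) : ℝ) := by
  obtain hempty | ⟨p, hp⟩ := (squareExtensions G L S v a b).eq_empty_or_nonempty
  · simp [hempty]
  obtain ⟨-, ⟨-, hnd, hS, -⟩, hva⟩ := mem_filter.mp hp
  have hR : a.toFinset.erase v ⊆ S.erase v := fun x hx => by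
    obtain ⟨hxv, hxa⟩ := mem_erase.mp hx
    exact mem_erase.mpr ⟨hxv, hS x (List.mem_append_left b (List.mem_toFinset.mp hxa))⟩
  have hRcard : #(a.toFinset.erase v) = t := by
    rw [card_erase_of_mem (List.mem_toFinset.mpr hva),
      List.toFinset_card_of_nodup (List.nodup_append.mp hnd).1, ha, Nat.add_sub_cancel]
  have hsdiff : S.erase v \ a.toFinset.erase v = S \ a.toFinset := by
    ext x
    simp only [mem_sdiff, mem_erase, List.mem_toFinset]
    constructor
    · rintro ⟨⟨hxv, hxS⟩, hx⟩
      exact ⟨hxS, fun hxa => hx ⟨hxv, hxa⟩⟩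
    · rintro ⟨hxS, hxa⟩
      exact ⟨⟨fun hxv => hxa (hxv ▸ hva), hxS⟩, fun h => hxa h.2⟩
  calc β ^ t * #(squareExtensions G L S v a b)
      ≤ β ^ t * #(nonrepetitiveColorings G L (S \ a.toFinset)) := by
        gcongr; exact_mod_cast card_squareExtensions_le
    _ ≤ _ := by simpa only [hRcard, hsdiff] using hpow _ hR

variable [G.LocallyFinite]

/-- A bad extension contains a square `a ++ b` with `v ∈ a`; it is filed under the half-length
`t + 1 = |a|` and the position `i` of `v` in `a`. -/
lemma badExtensions_subset_biUnion {S : Finset V} {v : V} :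
    badExtensions G L S v ⊆ (range (Fintype.card V)).biUnion fun t =>
      (range (t + 1)).biUnion fun i => (chainsThrough G i (2 * t + 1 - i) v).biUnion
        fun s => squareExtensions G L S v (s.take (t + 1)) (s.drop (t + 1)) := by
  intro p hp
  obtain ⟨hpair, hbad⟩ := mem_filter.mp hp
  obtain ⟨a, b, hsq, hva⟩ := exists_isSquarePath_of_not_nonrepetitiveOn_update
    (mem_nonrepetitiveColorings.mp (mem_product.mp hpair).1).2.2 hbad
  obtain ⟨a₁, a₂, rfl⟩ := List.append_of_mem hva
  have hlen : b.length = a₁.length + a₂.length + 1 := by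
    have := congrArg List.length hsq.2.2.2
    simp only [List.length_map, List.length_append, List.length_cons] at this
    omega
  have hcard := hsq.2.1.length_le_card
  simp only [List.length_append, List.length_cons] at hcard
  have hs : a₁ ++ v :: a₂ ++ b = a₁ ++ v :: (a₂ ++ b) := by simp
  simp only [mem_biUnion, mem_range]
  refine ⟨a₁.length + a₂.length, by omega, a₁.length, by omega, a₁ ++ v :: (a₂ ++ b), ?_, ?_⟩
  · convert append_cons_mem_chainsThrough (hs ▸ hsq.1) using 2
    simp only [List.length_append]
    omega
  · rw [← hs, List.take_left' (by simp; omega), List.drop_left' (by simp; omega)]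
    exact mem_filter.mpr ⟨hpair, hsq, hva⟩

lemma card_badExtensions_le {Δ : ℕ} (hdeg : ∀ v, G.degree v ≤ Δ) {β : ℝ} (hβ : 0 < β)
    {S : Finset V} {v : V}
    (hpow : ∀ R ⊆ S.erase v, β ^ #R * #(nonrepetitiveColorings G L (S.erase v \ R)) ≤
      (#(nonrepetitiveColorings G L (S.erase v)) : ℝ)) :
    (#(badExtensions G L S v) : ℝ) ≤
      (∑ t ∈ range (Fintype.card V), (t + 1) * (Δ : ℝ) ^ (2 * t + 1) / β ^ t) *
        #(nonrepetitiveColorings G L (S.erase v)) := by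
  set N : ℝ := (#(nonrepetitiveColorings G L (S.erase v)) : ℝ)
  calc (#(badExtensions G L S v) : ℝ)
      ≤ ∑ t ∈ range (Fintype.card V), ∑ i ∈ range (t + 1),
          ∑ s ∈ chainsThrough G i (2 * t + 1 - i) v,
            (#(squareExtensions G L S v (s.take (t + 1)) (s.drop (t + 1))) : ℝ) := by
        exact_mod_cast (card_le_card badExtensions_subset_biUnion).trans <| card_biUnion_le.trans <|
          sum_le_sum fun t _ => card_biUnion_le.trans <| sum_le_sum fun i _ => card_biUnion_le
    _ ≤ ∑ t ∈ range (Fintype.card V), ∑ i ∈ range (t + 1),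
          ∑ s ∈ chainsThrough G i (2 * t + 1 - i) v, N / β ^ t := by
        gcongr with t _ i hi s hs
        rw [le_div_iff₀ (by positivity), mul_comm]
        refine pow_mul_card_squareExtensions_le hβ.le hpow ?_
        rw [List.length_take, length_of_mem_chainsThrough hs]
        simp only [mem_range] at hi
        omega
    _ ≤ ∑ t ∈ range (Fintype.card V), ∑ i ∈ range (t + 1), (Δ : ℝ) ^ (2 * t + 1) * (N / β ^ t) := by
        gcongr with t _ i hi
        rw [sum_const, nsmul_eq_mul]
        gcongr
        simp only [mem_range] at hi
        exact_mod_cast (card_chainsThrough_le hdeg i _ v).trans_eq (by congr 1; omega)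
    _ = _ := by
        rw [sum_mul]
        refine sum_congr rfl fun t _ => ?_
        rw [sum_const, card_range, nsmul_eq_mul]
        push_cast
        ring

theorem mul_card_erase_le_card {Δ k : ℕ} (hdeg : ∀ v, G.degree v ≤ Δ) {β : ℝ} (hβ : 0 < β)
    (hk : β + ∑ t ∈ range (Fintype.card V), (t + 1) * (Δ : ℝ) ^ (2 * t + 1) / β ^ t ≤ k)
    (hL : ∀ v, k ≤ #(L v)) (S : Finset V) :
    ∀ v ∈ S, β * #(nonrepetitiveColorings G L (S.erase v)) ≤
      (#(nonrepetitiveColorings G L S) : ℝ) := by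
  induction S using Finset.strongInduction with
  | H S ih =>
  intro v hv
  have hpow := pow_card_mul_le_of_forall_erase (f := fun T => (#(nonrepetitiveColorings G L T) : ℝ))
    hβ.le fun T hT u hu => ih T (hT.trans_ssubset (erase_ssubset hv)) u hu
  have hbad := card_badExtensions_le hdeg hβ hpow
  have hext : (k : ℝ) * #(nonrepetitiveColorings G L (S.erase v)) ≤
      #(nonrepetitiveColorings G L S) + #(badExtensions G L S v) := by
    calc (k : ℝ) * #(nonrepetitiveColorings G L (S.erase v))
        ≤ #(L v) * #(nonrepetitiveColorings G L (S.erase v)) := by gcongr; exact_mod_cast hL v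
      _ ≤ _ := by exact_mod_cast card_mul_card_erase_le hv
  have := mul_le_mul_of_nonneg_right (le_sub_iff_add_le'.mpr hk)
    (Nat.cast_nonneg #(nonrepetitiveColorings G L (S.erase v)) : (0 : ℝ) ≤ _)
  linarith

end Counting

section ThueNumbers

variable {V : Type*} (G : SimpleGraph V)

def IsThueChoosable (k : ℕ) : Prop :=
  ∀ L : V → Finset ℕ, (∀ v, k ≤ #(L v)) → ∃ φ : V → ℕ, (∀ v, φ v ∈ L v) ∧ Nonrepetitive G φ

variable {G}

lemma thueChoiceNumber_le {k : ℕ} (h : IsThueChoosable G k) : thueChoiceNumber G ≤ k :=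
  Nat.sInf_le h

lemma thueNumber_le_of_isThueChoosable {k : ℕ} (h : IsThueChoosable G k) : thueNumber G ≤ k := by
  obtain ⟨φ, hφ, hnr⟩ := h (fun _ => range k) (by simp)
  exact Nat.sInf_le ⟨fun v => ⟨φ v, mem_range.mp (hφ v)⟩, Nonrepetitive.of_comp (f := Fin.val) hnr⟩

lemma thueNumber_le_thueChoiceNumber {k : ℕ} (h : IsThueChoosable G k) :
    thueNumber G ≤ thueChoiceNumber G :=
  thueNumber_le_of_isThueChoosable (Nat.sInf_mem (s := {k | IsThueChoosable G k}) ⟨k, h⟩)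

theorem isThueChoosable_of_add_sum_le [Fintype V] [G.LocallyFinite] {Δ k : ℕ}
    (hdeg : ∀ v, G.degree v ≤ Δ) {β : ℝ} (hβ : 0 < β)
    (hk : β + ∑ t ∈ range (Fintype.card V), (t + 1) * (Δ : ℝ) ^ (2 * t + 1) / β ^ t ≤ k) :
    IsThueChoosable G k := by
  classical
  intro L hL
  have hgrowth := pow_card_mul_le_of_forall_erase
    (f := fun T => (#(nonrepetitiveColorings G L T) : ℝ)) (U := univ) hβ.le
    (fun T _ u hu => mul_card_erase_le_card hdeg hβ hk hL T u hu) univ subset_rfl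
  have hempty : 0 < #(nonrepetitiveColorings G L ∅) :=
    card_pos.mpr ⟨0, zero_mem_nonrepetitiveColorings_empty⟩
  obtain ⟨φ, hφ⟩ : (nonrepetitiveColorings G L univ).Nonempty := by
    rw [← card_pos, ← Nat.cast_pos (α := ℝ)]
    rw [sdiff_self] at hgrowth
    exact (mul_pos (pow_pos hβ _) (Nat.cast_pos.mpr hempty)).trans_le hgrowth
  obtain ⟨hφL, -, hφnr⟩ := mem_nonrepetitiveColorings.mp hφ
  exact ⟨φ, fun v => hφL v (mem_univ v), Nonrepetitive.of_nonrepetitiveOn_univ hφnr⟩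

end ThueNumbers

lemma sum_succ_mul_pow_div_pow_le {D β : ℝ} (hD : 0 ≤ D) (hβ : D ^ 2 < β) (n : ℕ) :
    ∑ t ∈ range n, (t + 1) * D ^ (2 * t + 1) / β ^ t ≤ D * β ^ 2 / (β - D ^ 2) ^ 2 := by
  have hβ0 : 0 < β := (sq_nonneg D).trans_lt hβ
  set x := D ^ 2 / β with hx
  have hx0 : 0 ≤ x := by positivity
  have hx1 : x < 1 := (div_lt_one hβ0).mpr hβ
  have hsum : HasSum (fun t : ℕ => ((t : ℝ) + 1) * x ^ t) (1 / (1 - x) ^ 2) := by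
    simpa [Nat.choose_one_right] using
      hasSum_choose_mul_geometric_of_norm_lt_one 1 (r := x) (by rwa [Real.norm_of_nonneg hx0])
  calc ∑ t ∈ range n, (t + 1) * D ^ (2 * t + 1) / β ^ t
      = D * ∑ t ∈ range n, ((t : ℝ) + 1) * x ^ t := by
        rw [mul_sum]
        refine sum_congr rfl fun t _ => ?_
        rw [hx, div_pow, pow_succ, pow_mul]
        ring
    _ ≤ D * (1 / (1 - x) ^ 2) := by
        gcongr
        exact sum_le_hasSum _ (fun t _ => by positivity) hsum
    _ = D * β ^ 2 / (β - D ^ 2) ^ 2 := by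
        rw [hx, one_sub_div hβ0.ne']
        field_simp

/-- The choice `β = a⁶ + b a⁵` with `a = Δ^{1/3}`, `b = 2^{1/3}` makes `β - Δ² = (2Δ⁵)^{1/3}`,
which minimises `(β - Δ²) + Δ⁵ / (β - Δ²)²`, the leading part of `β + Δ β² / (β - Δ²)²`. -/
lemma add_mul_sq_div_sq_le_of_cube_eq_two {a b : ℝ} (hb : 0 < b) (hab : b < a) (hb3 : b ^ 3 = 2) :
    (a ^ 6 + b * a ^ 5) + a ^ 3 * (a ^ 6 + b * a ^ 5) ^ 2 / (a ^ 6 + b * a ^ 5 - (a ^ 3) ^ 2) ^ 2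
      ≤ a ^ 6 + 3 / b ^ 2 * a ^ 5 + b ^ 2 * a ^ 5 / (a - b) := by
  have ha : 0 < a := hb.trans hab
  have hsimp : a ^ 3 * (a ^ 6 + b * a ^ 5) ^ 2 / (a ^ 6 + b * a ^ 5 - (a ^ 3) ^ 2) ^ 2
      = a ^ 5 / b ^ 2 + (2 * a ^ 4 * b + a ^ 3 * b ^ 2) / b ^ 2 := by
    rw [show a ^ 6 + b * a ^ 5 - (a ^ 3) ^ 2 = b * a ^ 5 by ring]
    field_simp
    ring
  have hcoef : b * a ^ 5 + a ^ 5 / b ^ 2 = 3 / b ^ 2 * a ^ 5 := by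
    field_simp
    linear_combination hb3
  have htail : (2 * a ^ 4 * b + a ^ 3 * b ^ 2) / b ^ 2 ≤ b ^ 2 * a ^ 5 / (a - b) := by
    rw [div_le_div_iff₀ (by positivity) (by linarith)]
    have hdiff : b ^ 2 * a ^ 5 * b ^ 2 - (2 * a ^ 4 * b + a ^ 3 * b ^ 2) * (a - b)
        = a ^ 4 * b ^ 2 + a ^ 3 * b ^ 3 := by
      linear_combination a ^ 5 * b * hb3
    linarith [show 0 < a ^ 4 * b ^ 2 + a ^ 3 * b ^ 3 by positivity]
  rw [hsimp, ← hcoef]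
  linarith

noncomputable def goncalvesBound (D : ℝ) : ℝ :=
  D ^ 2 + 3 / (2 : ℝ) ^ ((2 : ℝ) / 3) * D ^ ((5 : ℝ) / 3)
    + (2 : ℝ) ^ ((2 : ℝ) / 3) * D ^ ((5 : ℝ) / 3) / (D ^ ((1 : ℝ) / 3) - (2 : ℝ) ^ ((1 : ℝ) / 3))

lemma exists_add_sum_le_goncalvesBound {D : ℝ} (hD : 2 < D) :
    ∃ β > 0, ∀ n : ℕ,
      β + ∑ t ∈ range n, (t + 1) * D ^ (2 * t + 1) / β ^ t ≤ goncalvesBound D := by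
  have cube_root_pow : ∀ x : ℝ, 0 ≤ x → ∀ n : ℕ, (x ^ ((1 : ℝ) / 3)) ^ n = x ^ ((n : ℝ) / 3) :=
    fun x hx n => by rw [← Real.rpow_natCast, ← Real.rpow_mul hx]; ring_nf
  set a := D ^ ((1 : ℝ) / 3)
  set b := (2 : ℝ) ^ ((1 : ℝ) / 3)
  have ha3 : a ^ 3 = D := by rw [cube_root_pow D (by linarith)]; norm_num
  have ha5 : D ^ ((5 : ℝ) / 3) = a ^ 5 := by rw [cube_root_pow D (by linarith)]; norm_num
  have hb3 : b ^ 3 = 2 := by rw [cube_root_pow 2 (by norm_num)]; norm_num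
  have hb2 : (2 : ℝ) ^ ((2 : ℝ) / 3) = b ^ 2 := by rw [cube_root_pow 2 (by norm_num)]; norm_num
  have hb : 0 < b := by positivity
  have hab : b < a := lt_of_pow_lt_pow_left₀ 3 (by positivity) (by rw [ha3, hb3]; exact hD)
  refine ⟨a ^ 6 + b * a ^ 5, by positivity, fun n => ?_⟩
  have hβ : D ^ 2 < a ^ 6 + b * a ^ 5 := by rw [← ha3]; nlinarith [pow_pos (hb.trans hab) 5]
  calc _ ≤ (a ^ 6 + b * a ^ 5) + D * (a ^ 6 + b * a ^ 5) ^ 2 / (a ^ 6 + b * a ^ 5 - D ^ 2) ^ 2 :=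
        by gcongr; exact sum_succ_mul_pow_div_pow_le (by linarith) hβ n
    _ ≤ a ^ 6 + 3 / b ^ 2 * a ^ 5 + b ^ 2 * a ^ 5 / (a - b) := by
        rw [← ha3]; exact add_mul_sq_div_sq_le_of_cube_eq_two hb hab hb3
    _ = goncalvesBound D := by
        rw [goncalvesBound, ha5, hb2, show D ^ ((1 : ℝ) / 3) = a from rfl, ← ha3]
        ring

theorem thue_le_thueChoice_le_goncalves {V : Type} [Fintype V]
    (G : SimpleGraph V) [DecidableRel G.Adj] (hΔ : 3 ≤ G.maxDegree) :
    thueNumber G ≤ thueChoiceNumber G ∧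
    (thueChoiceNumber G : ℤ) ≤
      ⌈(G.maxDegree : ℝ) ^ 2
          + 3 / (2 : ℝ) ^ ((2 : ℝ) / 3) * (G.maxDegree : ℝ) ^ ((5 : ℝ) / 3)
          + (2 : ℝ) ^ ((2 : ℝ) / 3) * (G.maxDegree : ℝ) ^ ((5 : ℝ) / 3) /
              ((G.maxDegree : ℝ) ^ ((1 : ℝ) / 3) - (2 : ℝ) ^ ((1 : ℝ) / 3))⌉ := by
  obtain ⟨β, hβ, hβB⟩ :=
    exists_add_sum_le_goncalvesBound (D := G.maxDegree) (by exact_mod_cast hΔ)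
  have hB : 0 ≤ goncalvesBound G.maxDegree := hβ.le.trans (by simpa using hβB 0)
  have hchoosable : IsThueChoosable G ⌈goncalvesBound G.maxDegree⌉₊ :=
    isThueChoosable_of_add_sum_le G.degree_le_maxDegree hβ ((hβB _).trans (Nat.le_ceil _))
  refine ⟨thueNumber_le_thueChoiceNumber hchoosable, ?_⟩
  rw [← goncalvesBound, ← Int.natCast_ceil_eq_ceil hB]
  exact_mod_cast thueChoiceNumber_le hchoosable
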